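/- (Sliced inverse regression identification, Appendix proposition used for Theorem 5.1.) Let z̃ be a random vector in ℝ^p with E z̃ = 0 and E z̃ z̃' = I_p, and let Y = h(ψ̃_1'z̃, …, ψ̃_L'z̃) + ε satisfy the sufficiency condition that the conditional distribution of Y given z̃ depends on z̃ only through (ψ̃_1'z̃, …, ψ̃_L'z̃). Assume the linear design condition: for every b ∈ ℝ^p, E( b'z̃ | ψ̃_1'z̃, …, ψ̃_L'z̃ ) is an affine function of (ψ̃_1'z̃, …, ψ̃_L'z̃). Fix H ≥ max{L, 2}, let I_h = [F_y^{-1}((h−1)/H), F_y^{-1}(h/H)] (F_y the CDF of Y) so that P(Y ∈ I_h) = 1/H, and define Σ_{z|y} = (1/H) Σ_{h=1}^H E(z̃ | Y ∈ I_h) E(z̃ | Y ∈ I_h)'. Then each vector E(z̃ | Y ∈ I_h) lies in span{ψ̃_1, …, ψ̃_L}; hence the column space of Σ_{z|y} is contained in span{ψ̃_1, …, ψ̃_L}, and if Σ_{z|y} has rank L, then the span of the eigenvectors ξ_1, …, ξ_L of Σ_{z|y} corresponding to its L largest eigenvalues equals span{ψ̃_1, …, ψ̃_L}. -/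

import Mathlib

open MeasureTheory Matrix

/-!
Take `b ⊥ span{ψ̃_l}`. By the linear design condition `A := E(b'z̃ | ψ̃'z̃)` equals
`a₀ + c'z̃` with `c ∈ span{ψ̃_l}`; as `E z̃ = 0` and `E z̃z̃' = I`,
`E A² = E[A · b'z̃] = c'b = 0`, so `A = 0`. With `g = 1{Y ∈ I}`, sufficiency gives
`E[b'z̃ g] = E[b'z̃ E(g | z̃)] = E[b'z̃ E(g | ψ̃'z̃)] = E[A E(g | ψ̃'z̃)] = 0`,
so every slice mean is orthogonal to `span{ψ̃_l}ᗮ`, hence lies in `span{ψ̃_l}`.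
The columns of `Σ_{z|y}` are combinations of slice means, an eigenvector with nonzero
eigenvalue lies in the column space, and `L` mutually orthogonal ones span an
`L`-dimensional subspace of the at most `L`-dimensional `span{ψ̃_l}`.
-/

lemma mem_span_range_of_forall_dotProduct_eq_zero {ι n : Type*} [Fintype n]
    {ψ : ι → n → ℝ} {v : n → ℝ}
    (hv : ∀ b : n → ℝ, (∀ l, ψ l ⬝ᵥ b = 0) → v ⬝ᵥ b = 0) :
    v ∈ Submodule.span ℝ (Set.range ψ) := by
  classical
  refine (Subspace.forall_mem_dualAnnihilator_apply_eq_zero_iff _ v).1 fun φ hφ => ?_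
  have hφ_eq : ∀ w, φ w = w ⬝ᵥ fun i => φ fun j => if i = j then 1 else 0 := fun w => by
    simp [φ.pi_apply_eq_sum_univ w, dotProduct]
  rw [Submodule.mem_dualAnnihilator] at hφ
  rw [hφ_eq]
  refine hv _ fun l => ?_
  rw [← hφ_eq]
  exact hφ _ (Submodule.subset_span ⟨l, rfl⟩)

lemma linearIndependent_of_dotProduct_eq_zero {ι n : Type*} [Fintype n] {ξ : ι → n → ℝ}
    (hne : ∀ l, ξ l ≠ 0) (horth : ∀ l l', l ≠ l' → ξ l ⬝ᵥ ξ l' = 0) :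
    LinearIndependent ℝ ξ := by
  have h := linearIndependent_of_ne_zero_of_inner_eq_zero (𝕜 := ℝ)
    (v := fun l => WithLp.toLp 2 (ξ l)) (by simpa using hne)
    fun l l' hll' => by simpa [EuclideanSpace.inner_toLp_toLp] using horth l' l hll'.symm
  exact h.map' (WithLp.linearEquiv 2 ℝ (n → ℝ)).toLinearMap (LinearEquiv.ker _)

lemma sum_vecMulVec_mulVec_mem {ι n : Type*} [Fintype n] {W : Submodule ℝ (n → ℝ)}
    (s : Finset ι) {m w : ι → n → ℝ} (hm : ∀ i, m i ∈ W) (v : n → ℝ) :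
    (∑ i ∈ s, vecMulVec (m i) (w i)) *ᵥ v ∈ W := by
  rw [sum_mulVec]
  exact W.sum_mem fun i _ => by
    rw [vecMulVec_mulVec, op_smul_eq_smul]; exact W.smul_mem _ (hm i)

lemma span_range_eq_of_linearIndependent {V : Type*} [AddCommGroup V] [Module ℝ V] {L : ℕ}
    {ξ : Fin L → V} {W : Submodule ℝ V} [FiniteDimensional ℝ W]
    (hξ : LinearIndependent ℝ ξ)
    (hmem : ∀ l, ξ l ∈ W) (hW : Module.finrank ℝ W ≤ L) :
    Submodule.span ℝ (Set.range ξ) = W := by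
  refine Submodule.eq_of_le_of_finrank_le (Submodule.span_le.2 (Set.range_subset_iff.2 hmem)) ?_
  rwa [finrank_span_eq_card hξ, Fintype.card_fin]

section CondExp

variable {Ω : Type*} {m m' m₀ : MeasurableSpace Ω} {μ : Measure Ω}

/-- Since `A` is an `m`-measurable version of `E[B | m]`, `E[A B] = E[A²]`. -/
lemma condExp_ae_eq_zero_of_integral_mul_eq_zero (hm : m ≤ m₀) [SigmaFinite (μ.trim hm)]
    {A B : Ω → ℝ} (hA : StronglyMeasurable[m] A) (hBA : μ[B | m] =ᵐ[μ] A)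
    (hB : Integrable B μ) (hAB : Integrable (A * B) μ) (h : ∫ ω, (A * B) ω ∂μ = 0) :
    μ[B | m] =ᵐ[μ] 0 := by
  have hpull : μ[A * B | m] =ᵐ[μ] A * A :=
    (condExp_mul_of_stronglyMeasurable_left hA hAB hB).trans (hBA.mono fun ω hω => by simp [hω])
  have hAA : ∫ ω, (A * A) ω ∂μ = 0 := by
    rw [← integral_congr_ae hpull, integral_condExp hm, h]
  have hA0 := (integral_eq_zero_iff_of_nonneg (fun ω => mul_self_nonneg (A ω))
    (integrable_condExp.congr hpull)).1 hAA
  filter_upwards [hBA, hA0] with ω hω hω0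
  simpa [hω] using hω0

lemma integral_mul_eq_zero_of_condExp_eq_zero [IsFiniteMeasure μ]
    (hm : m ≤ m₀) (hm' : m' ≤ m₀)
    {B g : Ω → ℝ} {R : ℝ} (hB : StronglyMeasurable[m'] B) (hBi : Integrable B μ)
    (hg : Integrable g μ) (hg_bdd : ∀ᵐ ω ∂μ, |g ω| ≤ R)
    (hcond : μ[g | m'] =ᵐ[μ] μ[g | m]) (hB0 : μ[B | m] =ᵐ[μ] 0) :
    ∫ ω, (B * g) ω ∂μ = 0 := by
  have hBg : Integrable (B * g) μ :=
    hBi.mul_bdd hg.aestronglyMeasurable (hg_bdd.mono fun ω hω => by rwa [Real.norm_eq_abs])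
  have hcond_bdd : ∀ᵐ ω ∂μ, ‖μ[g | m] ω‖ ≤ R :=
    (ae_bdd_abs_condExp_of_ae_bdd_abs hg_bdd).mono fun ω hω => by rwa [Real.norm_eq_abs]
  calc ∫ ω, (B * g) ω ∂μ = ∫ ω, (B * μ[g | m']) ω ∂μ := by
        rw [← integral_condExp hm',
          integral_congr_ae (condExp_mul_of_stronglyMeasurable_left hB hBg hg)]
    _ = ∫ ω, (μ[g | m] * B) ω ∂μ :=
        integral_congr_ae (hcond.mono fun ω hω => by simp [hω, mul_comm])
    _ = ∫ ω, (μ[g | m] * μ[B | m]) ω ∂μ := by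
        rw [← integral_condExp hm, integral_congr_ae
          (condExp_stronglyMeasurable_mul_of_bound hm stronglyMeasurable_condExp hBi R hcond_bdd)]
    _ = 0 := by
        rw [integral_congr_ae (hB0.mono fun ω hω => by simp [hω] : _ =ᵐ[μ] (0 : Ω → ℝ))]
        simp

lemma setIntegral_eq_zero_of_condExp_eq_zero [IsFiniteMeasure μ]
    (hm : m ≤ m₀) (hm' : m' ≤ m₀)
    {B : Ω → ℝ} (hB : StronglyMeasurable[m'] B) (hBi : Integrable B μ) {t : Set Ω}
    (ht : MeasurableSet t)
    (hcond : μ[t.indicator fun _ => (1 : ℝ) | m']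
      =ᵐ[μ] μ[t.indicator fun _ => (1 : ℝ) | m])
    (hB0 : μ[B | m] =ᵐ[μ] 0) :
    ∫ ω in t, B ω ∂μ = 0 := by
  have hind : t.indicator B = B * t.indicator fun _ => (1 : ℝ) := by
    ext ω; by_cases hω : ω ∈ t <;> simp [hω]
  have hbdd : ∀ᵐ ω ∂μ, |t.indicator (fun _ => (1 : ℝ)) ω| ≤ 1 :=
    .of_forall fun ω => by by_cases hω : ω ∈ t <;> simp [hω]
  rw [← integral_indicator ht, hind]
  exact integral_mul_eq_zero_of_condExp_eq_zero hm hm' hB hBi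
    ((integrable_const 1).indicator ht) hbdd hcond hB0

end CondExp

lemma integral_dotProduct {Ω n : Type*} [Fintype n] [MeasurableSpace Ω] {μ : Measure Ω}
    {z : Ω → n → ℝ} (hz : ∀ i, Integrable (fun ω => z ω i) μ) (b : n → ℝ) :
    ∫ ω, b ⬝ᵥ z ω ∂μ = b ⬝ᵥ fun i => ∫ ω, z ω i ∂μ := by
  simp only [dotProduct]
  rw [integral_finsetSum _ fun i _ => (hz i).const_mul (b i)]
  simp only [integral_const_mul]

lemma memLp_two_apply_of_integral_mul_eq_one {Ω n : Type*} [DecidableEq n] [MeasurableSpace Ω]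
    {μ : Measure Ω} {z : Ω → n → ℝ} (hz : Measurable z)
    (hcov : ∀ i j, ∫ ω, z ω i * z ω j ∂μ = (1 : Matrix n n ℝ) i j) (i : n) :
    MemLp (fun ω => z ω i) 2 μ := by
  refine (memLp_two_iff_integrable_sq (f := fun ω => z ω i)
    ((measurable_pi_apply i).comp hz).aestronglyMeasurable).2 ?_
  -- a non-integrable square would have integral `0`, not `1`
  by_contra hni
  have h := hcov i i
  simp only [← pow_two, one_apply_eq, integral_undef hni] at h
  exact zero_ne_one h

section Standardized

variable {Ω n : Type*} [Fintype n] [DecidableEq n] [MeasurableSpace Ω] {μ : Measure Ω}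
  {z : Ω → n → ℝ}

lemma memLp_two_dotProduct_of_integral_mul_eq_one (hz : Measurable z)
    (hcov : ∀ i j, ∫ ω, z ω i * z ω j ∂μ = (1 : Matrix n n ℝ) i j) (u : n → ℝ) :
    MemLp (fun ω => u ⬝ᵥ z ω) 2 μ := by
  simp only [dotProduct]
  exact memLp_finsetSum _ fun i _ =>
    (memLp_two_apply_of_integral_mul_eq_one hz hcov i).const_mul (u i)

lemma integral_dotProduct_mul_dotProduct (hz : Measurable z)
    (hcov : ∀ i j, ∫ ω, z ω i * z ω j ∂μ = (1 : Matrix n n ℝ) i j) (u v : n → ℝ) :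
    ∫ ω, (u ⬝ᵥ z ω) * (v ⬝ᵥ z ω) ∂μ = u ⬝ᵥ v := by
  have hzz : ∀ i j, Integrable (fun ω => u i * v j * (z ω i * z ω j)) μ := fun i j =>
    ((memLp_two_apply_of_integral_mul_eq_one hz hcov i).integrable_mul
      (memLp_two_apply_of_integral_mul_eq_one hz hcov j)).const_mul _
  have hexpand : (fun ω => (u ⬝ᵥ z ω) * (v ⬝ᵥ z ω))
      = fun ω => ∑ i, ∑ j, u i * v j * (z ω i * z ω j) := funext fun ω => by
    simp only [dotProduct, Finset.sum_mul_sum, mul_mul_mul_comm]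
  rw [hexpand, integral_finsetSum _ fun i _ => integrable_finsetSum _ fun j _ => hzz i j]
  simp only [integral_finsetSum _ fun j _ => hzz _ j, integral_const_mul, hcov, one_apply]
  simp [dotProduct]

end Standardized

lemma measurable_dotProduct_indices {Ω ι n : Type*} [Fintype n] [MeasurableSpace Ω]
    {z : Ω → n → ℝ} {ψ : ι → n → ℝ} (hz : Measurable z) :
    Measurable fun ω l => ψ l ⬝ᵥ z ω :=
  measurable_pi_lambda _ fun _ => (continuous_const.dotProduct continuous_id).measurable.comp hz

section LinearDesign

variable {Ω ι n : Type*} [Fintype ι] [Fintype n] [DecidableEq n] [MeasurableSpace Ω]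
  {P : Measure Ω} [IsFiniteMeasure P] {z : Ω → n → ℝ} {ψ : ι → n → ℝ}
  {b : n → ℝ}

lemma condExp_dotProduct_eq_zero_of_forall_dotProduct_eq_zero (hz : Measurable z)
    (hmean : ∀ i, ∫ ω, z ω i ∂P = 0)
    (hcov : ∀ i j, ∫ ω, z ω i * z ω j ∂P = (1 : Matrix n n ℝ) i j)
    (hlin : ∃ (a0 : ℝ) (a : ι → ℝ),
      P[(fun ω => b ⬝ᵥ z ω) |
          MeasurableSpace.comap (fun ω => fun l => ψ l ⬝ᵥ z ω) inferInstance]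
        =ᵐ[P] fun ω => a0 + ∑ l, a l * (ψ l ⬝ᵥ z ω))
    (hb : ∀ l, ψ l ⬝ᵥ b = 0) :
    P[(fun ω => b ⬝ᵥ z ω) |
      MeasurableSpace.comap (fun ω => fun l => ψ l ⬝ᵥ z ω) inferInstance] =ᵐ[P] 0 := by
  set κ : Ω → ι → ℝ := fun ω l => ψ l ⬝ᵥ z ω
  have hL2 := memLp_two_dotProduct_of_integral_mul_eq_one hz hcov
  have hBi : Integrable (fun ω => b ⬝ᵥ z ω) P := (hL2 b).integrable one_le_two
  obtain ⟨a0, a, hA⟩ := hlin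
  set c : n → ℝ := ∑ l, a l • ψ l
  have hAc : (fun ω => a0 + ∑ l, a l * (ψ l ⬝ᵥ z ω)) = fun ω => a0 + c ⬝ᵥ z ω := by
    simp only [c, sum_dotProduct, smul_dotProduct, smul_eq_mul]
  have hAm : StronglyMeasurable[MeasurableSpace.comap κ inferInstance]
      fun ω => a0 + c ⬝ᵥ z ω := by
    have hφ : Measurable fun y : ι → ℝ => a0 + a ⬝ᵥ y :=
      measurable_const.add (continuous_const.dotProduct continuous_id).measurable
    rw [← hAc]
    exact (hφ.comp (comap_measurable κ)).stronglyMeasurable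
  rw [hAc] at hA
  refine condExp_ae_eq_zero_of_integral_mul_eq_zero (measurable_dotProduct_indices hz).comap_le
    hAm hA hBi    (((memLp_const a0).add (hL2 c)).integrable_mul (hL2 b)) ?_
  have hexpand : (fun ω => a0 + c ⬝ᵥ z ω) * (fun ω => b ⬝ᵥ z ω)
      = fun ω => a0 * (b ⬝ᵥ z ω) + (c ⬝ᵥ z ω) * (b ⬝ᵥ z ω) := by
    ext ω; simp only [Pi.mul_apply]; ring
  have hcb : Integrable (fun ω => (c ⬝ᵥ z ω) * (b ⬝ᵥ z ω)) P :=
    (hL2 c).integrable_mul (hL2 b)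
  have hzi : ∀ i, Integrable (fun ω => z ω i) P := fun i =>
    (memLp_two_apply_of_integral_mul_eq_one hz hcov i).integrable one_le_two
  simp only [hexpand]
  rw [integral_add (hBi.const_mul a0) hcb, integral_const_mul, integral_dotProduct hzi,
    integral_dotProduct_mul_dotProduct hz hcov]
  simp [hmean, c, sum_dotProduct, hb]

lemma setIntegral_dotProduct_eq_zero_of_forall_dotProduct_eq_zero (hz : Measurable z)
    {Y : Ω → ℝ} (hY : Measurable Y)
    (hmean : ∀ i, ∫ ω, z ω i ∂P = 0)
    (hcov : ∀ i j, ∫ ω, z ω i * z ω j ∂P = (1 : Matrix n n ℝ) i j) {s : Set ℝ}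
    (hs : MeasurableSet s)
    (hsuff : P[Set.indicator (Y ⁻¹' s) (fun _ => (1 : ℝ)) |
          MeasurableSpace.comap z inferInstance]
        =ᵐ[P] P[Set.indicator (Y ⁻¹' s) (fun _ => (1 : ℝ)) |
          MeasurableSpace.comap (fun ω => fun l => ψ l ⬝ᵥ z ω) inferInstance])
    (hlin : ∃ (a0 : ℝ) (a : ι → ℝ),
      P[(fun ω => b ⬝ᵥ z ω) |
          MeasurableSpace.comap (fun ω => fun l => ψ l ⬝ᵥ z ω) inferInstance]
        =ᵐ[P] fun ω => a0 + ∑ l, a l * (ψ l ⬝ᵥ z ω))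
    (hb : ∀ l, ψ l ⬝ᵥ b = 0) :
    ∫ ω in Y ⁻¹' s, b ⬝ᵥ z ω ∂P = 0 := by
  have hdot : Measurable fun x : n → ℝ => b ⬝ᵥ x :=
    (continuous_const.dotProduct continuous_id).measurable
  exact setIntegral_eq_zero_of_condExp_eq_zero (measurable_dotProduct_indices hz).comap_le
    hz.comap_le
    (hdot.comp (comap_measurable z)).stronglyMeasurable
    ((memLp_two_dotProduct_of_integral_mul_eq_one hz hcov b).integrable one_le_two) (hY hs) hsuff
    (condExp_dotProduct_eq_zero_of_forall_dotProduct_eq_zero hz hmean hcov hlin hb)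

end LinearDesign

theorem sliced_inverse_regression_general
    {Ω : Type} [MeasurableSpace Ω] (P : Measure Ω) [IsProbabilityMeasure P]
    (p L H : ℕ)
    (z : Ω → Fin p → ℝ) (hz : Measurable z)
    (Y : Ω → ℝ) (hY : Measurable Y)
    (ψ : Fin L → Fin p → ℝ)
    -- standardization: E z̃ = 0 and E z̃ z̃' = I
    (hmean : ∀ i, ∫ ω, z ω i ∂P = 0)
    (hcov : ∀ i j, ∫ ω, z ω i * z ω j ∂P = (1 : Matrix (Fin p) (Fin p) ℝ) i j)
    -- sufficiency: the conditional distribution of Y given z̃ depends on z̃ only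
    -- through the indices (ψ̃₁'z̃, …, ψ̃_L'z̃)
    (hsuff : ∀ s : Set ℝ, MeasurableSet s →
      P[Set.indicator (Y ⁻¹' s) (fun _ => (1 : ℝ)) |
          MeasurableSpace.comap z inferInstance]
        =ᵐ[P] P[Set.indicator (Y ⁻¹' s) (fun _ => (1 : ℝ)) |
          MeasurableSpace.comap (fun ω => fun l => ψ l ⬝ᵥ z ω) inferInstance])
    -- linear design condition: E(b'z̃ | ψ̃₁'z̃, …, ψ̃_L'z̃) is affine in the indices
    (hlin : ∀ bv : Fin p → ℝ, ∃ (a0 : ℝ) (a : Fin L → ℝ),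
      P[(fun ω => bv ⬝ᵥ z ω) |
          MeasurableSpace.comap (fun ω => fun l => ψ l ⬝ᵥ z ω) inferInstance]
        =ᵐ[P] fun ω => a0 + ∑ l, a l * (ψ l ⬝ᵥ z ω))
    -- the interval slices, each of probability 1/H
    (Ih : Fin H → Set ℝ) (aI bI : Fin H → ℝ)
    (hIcc : ∀ h', Ih h' = Set.Icc (aI h') (bI h'))
    -- the slice means E(z̃ | Y ∈ I_h) = H ∫_{Y ∈ I_h} z̃ dP
    (mh : Fin H → Fin p → ℝ)
    (hmh : ∀ h' i, mh h' i = (H : ℝ) * ∫ ω in Y ⁻¹' Ih h', z ω i ∂P)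
    -- the sliced covariance matrix
    (Sigzy : Matrix (Fin p) (Fin p) ℝ)
    (hSig : Sigzy = (H : ℝ)⁻¹ • ∑ h', Matrix.vecMulVec (mh h') (mh h')) :
    -- (1) each slice mean lies in span{ψ̃₁,…,ψ̃_L}
    (∀ h', mh h' ∈ Submodule.span ℝ (Set.range ψ)) ∧
    -- (2) the column space of Σ_{z|y} is contained in span{ψ̃₁,…,ψ̃_L}
    (∀ v : Fin p → ℝ, Sigzy *ᵥ v ∈ Submodule.span ℝ (Set.range ψ)) ∧
    -- (3) if rank Σ_{z|y} = L, eigenvectors for the L largest (nonzero) eigenvalues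
    --     span exactly span{ψ̃₁,…,ψ̃_L}
    (Sigzy.rank = L →
      ∀ (ξ : Fin L → Fin p → ℝ) (μ : Fin L → ℝ),
        (∀ l, Sigzy *ᵥ ξ l = μ l • ξ l) →
        (∀ l, ξ l ≠ 0) → (∀ l, μ l ≠ 0) →
        (∀ l l', l ≠ l' → ξ l ⬝ᵥ ξ l' = 0) →
        Submodule.span ℝ (Set.range ξ) = Submodule.span ℝ (Set.range ψ)) := by
  have hzi : ∀ i, Integrable (fun ω => z ω i) P := fun i =>
    (memLp_two_apply_of_integral_mul_eq_one hz hcov i).integrable one_le_two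
  have hmem : ∀ h', mh h' ∈ Submodule.span ℝ (Set.range ψ) := by
    intro h'
    have hIh : MeasurableSet (Ih h') := hIcc h' ▸ measurableSet_Icc
    have hslice : mh h' = (H : ℝ) • fun i => ∫ ω in Y ⁻¹' Ih h', z ω i ∂P :=
      funext (hmh h')
    refine mem_span_range_of_forall_dotProduct_eq_zero fun b hb => ?_
    rw [hslice, smul_dotProduct, dotProduct_comm,
      ← integral_dotProduct fun i => (hzi i).integrableOn,
      setIntegral_dotProduct_eq_zero_of_forall_dotProduct_eq_zero hz hY hmean hcov hIh
        (hsuff _ hIh) (hlin b) hb, smul_zero]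
  have hcol : ∀ v, Sigzy *ᵥ v ∈ Submodule.span ℝ (Set.range ψ) := fun v => by
    rw [hSig, smul_mulVec]
    exact Submodule.smul_mem _ _ (sum_vecMulVec_mulVec_mem _ hmem v)
  refine ⟨hmem, hcol, fun _ ξ μ heig hne hμ horth =>
    span_range_eq_of_linearIndependent (linearIndependent_of_dotProduct_eq_zero hne horth)
      (fun l => ?_) ((finrank_range_le_card ψ).trans (Fintype.card_fin L).le)⟩
  rw [← inv_smul_smul₀ (hμ l) (ξ l), ← heig l]
  exact Submodule.smul_mem _ _ (hcol (ξ l))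

/-- **Sliced inverse regression identification (Appendix proposition for Theorem 5.1).**
Let `z̃` be a standardized random vector (`E z̃ = 0`, `E z̃ z̃' = I_p`) and
`Y = h(ψ̃₁'z̃, …, ψ̃_L'z̃) + ε`, where the conditional distribution of `Y` given `z̃`
depends on `z̃` only through the indices, and suppose the linear design condition holds.
Divide the range of `Y` into `H ≥ max{L,2}` interval slices of probability `1/H` each,
and let `Σ_{z|y} = H⁻¹ Σ_h E(z̃|Y∈I_h)E(z̃|Y∈I_h)'`.  Then every slice mean
`E(z̃|Y∈I_h)` lies in `span{ψ̃₁,…,ψ̃_L}`; hence the column space of `Σ_{z|y}` is contained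
in that span; and if `Σ_{z|y}` has rank `L`, the span of the eigenvectors of `Σ_{z|y}`
corresponding to its `L` largest (equivalently, nonzero) eigenvalues equals
`span{ψ̃₁,…,ψ̃_L}`. -/
theorem sliced_inverse_regression
    {Ω : Type} [MeasurableSpace Ω] (P : Measure Ω) [IsProbabilityMeasure P]
    (p L H : ℕ) (hL : 0 < L) (hH : max L 2 ≤ H)
    (z : Ω → Fin p → ℝ) (hz : Measurable z)
    (Y : Ω → ℝ) (hY : Measurable Y)
    (ψ : Fin L → Fin p → ℝ)
    (h : (Fin L → ℝ) → ℝ) (ε : Ω → ℝ)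
    (hmodel : ∀ ω, Y ω = h (fun l => ψ l ⬝ᵥ z ω) + ε ω)
    -- standardization: E z̃ = 0 and E z̃ z̃' = I
    (hmean : ∀ i, ∫ ω, z ω i ∂P = 0)
    (hcov : ∀ i j, ∫ ω, z ω i * z ω j ∂P = (1 : Matrix (Fin p) (Fin p) ℝ) i j)
    -- sufficiency: the conditional distribution of Y given z̃ depends on z̃ only
    -- through the indices (ψ̃₁'z̃, …, ψ̃_L'z̃)
    (hsuff : ∀ s : Set ℝ, MeasurableSet s →
      P[Set.indicator (Y ⁻¹' s) (fun _ => (1 : ℝ)) |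
          MeasurableSpace.comap z inferInstance]
        =ᵐ[P] P[Set.indicator (Y ⁻¹' s) (fun _ => (1 : ℝ)) |
          MeasurableSpace.comap (fun ω => fun l => ψ l ⬝ᵥ z ω) inferInstance])
    -- linear design condition: E(b'z̃ | ψ̃₁'z̃, …, ψ̃_L'z̃) is affine in the indices
    (hlin : ∀ bv : Fin p → ℝ, ∃ (a0 : ℝ) (a : Fin L → ℝ),
      P[(fun ω => bv ⬝ᵥ z ω) |
          MeasurableSpace.comap (fun ω => fun l => ψ l ⬝ᵥ z ω) inferInstance]
        =ᵐ[P] fun ω => a0 + ∑ l, a l * (ψ l ⬝ᵥ z ω))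
    -- the interval slices, each of probability 1/H
    (Ih : Fin H → Set ℝ) (aI bI : Fin H → ℝ)
    (hIcc : ∀ h', Ih h' = Set.Icc (aI h') (bI h'))
    (hprob : ∀ h', (P (Y ⁻¹' Ih h')).toReal = 1 / H)
    -- the slice means E(z̃ | Y ∈ I_h) = H ∫_{Y ∈ I_h} z̃ dP
    (mh : Fin H → Fin p → ℝ)
    (hmh : ∀ h' i, mh h' i = (H : ℝ) * ∫ ω in Y ⁻¹' Ih h', z ω i ∂P)
    -- the sliced covariance matrix
    (Sigzy : Matrix (Fin p) (Fin p) ℝ)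
    (hSig : Sigzy = (H : ℝ)⁻¹ • ∑ h', Matrix.vecMulVec (mh h') (mh h')) :
    -- (1) each slice mean lies in span{ψ̃₁,…,ψ̃_L}
    (∀ h', mh h' ∈ Submodule.span ℝ (Set.range ψ)) ∧
    -- (2) the column space of Σ_{z|y} is contained in span{ψ̃₁,…,ψ̃_L}
    (∀ v : Fin p → ℝ, Sigzy *ᵥ v ∈ Submodule.span ℝ (Set.range ψ)) ∧
    -- (3) if rank Σ_{z|y} = L, eigenvectors for the L largest (nonzero) eigenvalues
    --     span exactly span{ψ̃₁,…,ψ̃_L}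
    (Sigzy.rank = L →
      ∀ (ξ : Fin L → Fin p → ℝ) (μ : Fin L → ℝ),
        (∀ l, Sigzy *ᵥ ξ l = μ l • ξ l) →
        (∀ l, ξ l ≠ 0) → (∀ l, μ l ≠ 0) →
        (∀ l l', l ≠ l' → ξ l ⬝ᵥ ξ l' = 0) →
        Submodule.span ℝ (Set.range ξ) = Submodule.span ℝ (Set.range ψ)) :=
  sliced_inverse_regression_general P p L H z hz Y hY ψ hmean hcov hsuff hlin Ih aI bI hIcc mh hmh
    Sigzy hSig
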